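/- Let F be a non-fragile connected GSC with exactly one cut point x. Then there exists a digit i ∈ 𝒟 such that x is the fixed point of φ_i, i.e., x = i/(N−1). -/
import Mathlib


open Set

/-- The map φ_d(x) = (x + d)/N on ℝ². -/
noncomputable def phi (N : ℕ) (d : ℕ × ℕ) (x : ℝ × ℝ) : ℝ × ℝ :=
  ((x.1 + d.1) / N, (x.2 + d.2) / N)

lemma phi_continuous (N : ℕ) (d : ℕ × ℕ) : Continuous (phi N d) := by
  unfold phi; fun_prop

lemma phi_injective (N : ℕ) (hN : 2 ≤ N) (d : ℕ × ℕ) : Function.Injective (phi N d) := by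
  intro a b hab
  have hN0 : (N : ℝ) ≠ 0 := by positivity
  simp only [phi, Prod.mk.injEq] at hab
  obtain ⟨h1, h2⟩ := hab
  have e1 : a.1 = b.1 := by field_simp at h1; linarith
  have e2 : a.2 = b.2 := by field_simp at h2; linarith
  exact Prod.ext e1 e2

/-- A connected GSC is fragile if the digit set splits into two nonempty parts
whose unions of level-1 cells meet in a single point. -/
def Fragile (N : ℕ) (D : Finset (ℕ × ℕ)) (F : Set (ℝ × ℝ)) : Prop :=
  ∃ D₁ D₂ : Finset (ℕ × ℕ), D₁ ∪ D₂ = D ∧ Disjoint D₁ D₂ ∧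
    D₁.Nonempty ∧ D₂.Nonempty ∧
    ∃ z : ℝ × ℝ, (⋃ d ∈ D₁, phi N d '' F) ∩ (⋃ d ∈ D₂, phi N d '' F) = {z}

/-- If F is a non-fragile connected GSC with exactly one cut point x, then x is
the fixed point of φ_i for some digit i ∈ 𝒟, i.e. x = i/(N−1). -/
theorem stmt11 (N : ℕ) (hN : 2 ≤ N) (D : Finset (ℕ × ℕ))
    (hD : ∀ d ∈ D, d.1 < N ∧ d.2 < N) (hDcard : 1 < D.card ∧ D.card < N ^ 2)
    (F : Set (ℝ × ℝ)) (hFne : F.Nonempty) (hFc : IsCompact F)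
    (hFattr : F = ⋃ d ∈ D, phi N d '' F) (hFconn : IsConnected F)
    (hnf : ¬ Fragile N D F)
    (x : ℝ × ℝ)
    (hunique : {y : ℝ × ℝ | y ∈ F ∧ ¬ IsPreconnected (F \ {y})} = {x}) :
    ∃ i ∈ D, x = ((i.1 : ℝ) / (N - 1), (i.2 : ℝ) / (N - 1)) := by
  classical
  have hNR : (1 : ℝ) < (N : ℝ) := by exact_mod_cast Nat.lt_of_lt_of_le one_lt_two hN
  -- x is a cut point
  have hx : x ∈ F ∧ ¬ IsPreconnected (F \ {x}) := by
    have : x ∈ {y : ℝ × ℝ | y ∈ F ∧ ¬ IsPreconnected (F \ {y})} := by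
      rw [hunique]; exact rfl
    exact this
  obtain ⟨hxF, hxcut⟩ := hx
  -- extract a separation of F \ {x}
  rw [IsPreconnected] at hxcut
  push_neg at hxcut
  obtain ⟨U, V, hU, hV, hcover, hUne, hVne, hUV⟩ := hxcut
  have hUVempty : F \ {x} ∩ (U ∩ V) = ∅ := hUV
  -- cells
  set C : ℕ × ℕ → Set (ℝ × ℝ) := fun d => phi N d '' F with hC
  have hCsub : ∀ d ∈ D, C d ⊆ F := by
    intro d hd
    rw [hFattr]
    exact subset_biUnion_of_mem (u := fun d => phi N d '' F) hd
  have hCne : ∀ d, (C d).Nonempty := fun d => hFne.image _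
  have hMem : ∀ p ∈ F, ∃ d ∈ D, p ∈ C d := by
    intro p hp
    rw [hFattr] at hp
    obtain ⟨d, hd, h⟩ := mem_iUnion₂.mp hp
    exact ⟨d, hd, h⟩
  by_cases hcase : ∃ d ∈ D, ((C d \ {x}) ∩ U).Nonempty ∧ ((C d \ {x}) ∩ V).Nonempty
  · -- Case 1: some cell minus x meets both sides; its preimage of x is a cut point
    obtain ⟨d, hdD, hdU, hdV⟩ := hcase
    refine ⟨d, hdD, ?_⟩
    have hsubx : C d \ {x} ⊆ F \ {x} := diff_subset_diff_left (hCsub d hdD)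
    -- x must belong to C d
    have hxCd : x ∈ C d := by
      by_contra hxn
      have heq : C d \ {x} = C d := diff_singleton_eq_self hxn
      have hpre : IsPreconnected (C d) :=
        (hFconn.isPreconnected).image _ (phi_continuous N d).continuousOn
      rw [heq] at hdU hdV
      have hcov' : C d ⊆ U ∪ V := by rw [← heq]; exact hsubx.trans hcover
      obtain ⟨q, hq⟩ := hpre U V hU hV hcov' hdU hdV
      have hqx : q ∈ C d \ {x} := ⟨hq.1, fun h => hxn (h ▸ hq.1)⟩
      have : q ∈ F \ {x} ∩ (U ∩ V) := ⟨hsubx hqx, hq.2⟩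
      rw [hUVempty] at this
      exact this
    obtain ⟨y, hyF, hyx⟩ := hxCd
    -- y is a cut point of F
    have hycut : ¬ IsPreconnected (F \ {y}) := by
      intro hpre
      have himg : phi N d '' (F \ {y}) = C d \ {x} := by
        rw [hC]
        rw [image_diff (phi_injective N hN d), image_singleton, hyx]
      have hpre' : IsPreconnected (C d \ {x}) := by
        rw [← himg]
        exact hpre.image _ (phi_continuous N d).continuousOn
      obtain ⟨q, hq⟩ := hpre' U V hU hV (hsubx.trans hcover) hdU hdV
      have : q ∈ F \ {x} ∩ (U ∩ V) := ⟨hsubx hq.1, hq.2⟩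
      rw [hUVempty] at this
      exact this
    have hyx' : y = x := by
      have : y ∈ {y : ℝ × ℝ | y ∈ F ∧ ¬ IsPreconnected (F \ {y})} := ⟨hyF, hycut⟩
      rw [hunique] at this
      exact this
    -- so x is the fixed point of phi N d
    rw [hyx'] at hyx
    have h1 : (x.1 + d.1) / N = x.1 := congrArg Prod.fst hyx
    have h2 : (x.2 + d.2) / N = x.2 := congrArg Prod.snd hyx
    have hN1 : (N : ℝ) - 1 ≠ 0 := by linarith
    have e1 : x.1 = (d.1 : ℝ) / (N - 1) := by
      field_simp at h1 ⊢; linarith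
    have e2 : x.2 = (d.2 : ℝ) / (N - 1) := by
      field_simp at h2 ⊢; linarith
    exact Prod.ext e1 e2
  · -- Case 2: every cell minus x lies in U or in V; F is fragile, contradiction
    exfalso
    push_neg at hcase
    -- each cell minus x lies entirely in U or entirely in V
    have hside : ∀ d ∈ D, C d \ {x} ⊆ U ∨ C d \ {x} ⊆ V := by
      intro d hd
      have hsubx : C d \ {x} ⊆ F \ {x} := diff_subset_diff_left (hCsub d hd)
      rcases eq_empty_or_nonempty ((C d \ {x}) ∩ U) with hE | hNE
      · right
        intro p hp
        rcases hcover (hsubx hp) with h | h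
        · exact absurd (mem_inter hp h) (by rw [hE]; exact notMem_empty p)
        · exact h
      · left
        have hVE : C d \ {x} ∩ V = ∅ := hcase d hd hNE
        intro p hp
        rcases hcover (hsubx hp) with h | h
        · exact h
        · exact absurd (mem_inter hp h) (by rw [hVE]; exact notMem_empty p)
    set D₁ : Finset (ℕ × ℕ) := D.filter (fun d => C d \ {x} ⊆ U) with hD₁
    set D₂ : Finset (ℕ × ℕ) := D.filter (fun d => ¬ (C d \ {x} ⊆ U)) with hD₂
    have hD2V : ∀ d ∈ D₂, C d \ {x} ⊆ V := by
      intro d hd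
      rw [hD₂, Finset.mem_filter] at hd
      rcases hside d hd.1 with h | h
      · exact absurd h hd.2
      · exact h
    have hunion : D₁ ∪ D₂ = D := Finset.filter_union_filter_not_eq _ D
    have hdisj : Disjoint D₁ D₂ := Finset.disjoint_filter_filter_not D D _
    -- D₁ nonempty
    obtain ⟨p, hpF, hpU⟩ := hUne
    obtain ⟨dp, hdp, hpC⟩ := hMem p hpF.1
    have hdp1 : dp ∈ D₁ := by
      rw [hD₁, Finset.mem_filter]
      refine ⟨hdp, ?_⟩
      rcases hside dp hdp with h | h
      · exact h
      · exfalso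
        have hpmem : p ∈ C dp \ {x} := ⟨hpC, hpF.2⟩
        have : p ∈ F \ {x} ∩ (U ∩ V) := ⟨hpF, hpU, h hpmem⟩
        rw [hUVempty] at this
        exact this
    -- D₂ nonempty
    obtain ⟨q, hqF, hqV⟩ := hVne
    obtain ⟨dq, hdq, hqC⟩ := hMem q hqF.1
    have hdq2 : dq ∈ D₂ := by
      rw [hD₂, Finset.mem_filter]
      refine ⟨hdq, ?_⟩
      intro h
      have hqmem : q ∈ C dq \ {x} := ⟨hqC, hqF.2⟩
      have : q ∈ F \ {x} ∩ (U ∩ V) := ⟨hqF, h hqmem, hqV⟩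
      rw [hUVempty] at this
      exact this
    -- the two unions
    set K₁ : Set (ℝ × ℝ) := ⋃ d ∈ D₁, phi N d '' F with hK₁
    set K₂ : Set (ℝ × ℝ) := ⋃ d ∈ D₂, phi N d '' F with hK₂
    have hK₁c : IsClosed K₁ := by
      rw [hK₁]
      exact (D₁.isCompact_biUnion (fun d _ => hFc.image (phi_continuous N d))).isClosed
    have hK₂c : IsClosed K₂ := by
      rw [hK₂]
      exact (D₂.isCompact_biUnion (fun d _ => hFc.image (phi_continuous N d))).isClosed
    have hKcover : F ⊆ K₁ ∪ K₂ := by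
      intro p hp
      obtain ⟨d, hd, hpC⟩ := hMem p hp
      rw [← hunion, Finset.mem_union] at hd
      rcases hd with h | h
      · exact Or.inl (mem_biUnion h hpC)
      · exact Or.inr (mem_biUnion h hpC)
    -- the intersection is contained in {x}
    have hsub : K₁ ∩ K₂ ⊆ {x} := by
      rintro z ⟨hz1, hz2⟩
      by_contra hzx
      simp only [mem_singleton_iff] at hzx
      obtain ⟨d₁, hd₁, hzC₁⟩ := mem_iUnion₂.mp hz1
      obtain ⟨d₂, hd₂, hzC₂⟩ := mem_iUnion₂.mp hz2
      have hd₁D : d₁ ∈ D := Finset.mem_of_mem_filter d₁ hd₁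
      have hd₂D : d₂ ∈ D := Finset.mem_of_mem_filter d₂ hd₂
      have hzU : z ∈ U := by
        rw [hD₁, Finset.mem_filter] at hd₁
        exact hd₁.2 ⟨hzC₁, hzx⟩
      have hzV : z ∈ V := hD2V d₂ hd₂ ⟨hzC₂, hzx⟩
      have hzF : z ∈ F := hCsub d₁ hd₁D hzC₁
      have : z ∈ F \ {x} ∩ (U ∩ V) := ⟨⟨hzF, hzx⟩, hzU, hzV⟩
      rw [hUVempty] at this
      exact this
    -- the intersection is nonempty, by connectedness of F
    have hne : (K₁ ∩ K₂).Nonempty := by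
      by_contra hE
      rw [not_nonempty_iff_eq_empty] at hE
      have hdisjK : Disjoint K₁ K₂ := disjoint_iff_inter_eq_empty.mpr hE
      have := (isPreconnected_iff_subset_of_fully_disjoint_closed hFc.isClosed).mp
        hFconn.isPreconnected K₁ K₂ hK₁c hK₂c hKcover hdisjK
      rcases this with h | h
      · obtain ⟨w, hw⟩ := hCne dq
        have hw1 : w ∈ K₁ := h (hCsub dq hdq hw)
        have hw2 : w ∈ K₂ := mem_biUnion hdq2 hw
        exact absurd (mem_inter hw1 hw2) (by rw [hE]; exact notMem_empty w)
      · obtain ⟨w, hw⟩ := hCne dp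
        have hw2 : w ∈ K₂ := h (hCsub dp hdp hw)
        have hw1 : w ∈ K₁ := mem_biUnion hdp1 hw
        exact absurd (mem_inter hw1 hw2) (by rw [hE]; exact notMem_empty w)
    -- hence equal to {x}: fragile
    apply hnf
    refine ⟨D₁, D₂, hunion, hdisj, ⟨dp, hdp1⟩, ⟨dq, hdq2⟩, x, ?_⟩
    apply Subset.antisymm hsub
    obtain ⟨z, hz⟩ := hne
    have := hsub hz
    simp only [mem_singleton_iff] at this
    rw [← this]
    exact singleton_subset_iff.mpr hz
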